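/- If A is a directly indecomposable absolute retract in a congruence modular variety, then A is finitely subdirectly irreducible. -/

import Mathlib

/-- An algebraic signature: a type of operation symbols with finite arities. -/
structure Signature where
  ops : Type
  arity : ops → ℕ

/-- An algebra for a signature. -/
structure SAlgebra (S : Signature) where
  carrier : Type
  interp : (o : S.ops) → (Fin (S.arity o) → carrier) → carrier

namespace SAlgebra

variable {S : Signature}

/-- Binary product of algebras. -/
def prod (A B : SAlgebra S) : SAlgebra S where
  carrier := A.carrier × B.carrier
  interp o x := (A.interp o fun i => (x i).1, B.interp o fun i => (x i).2)

/-- Product of a family of algebras. -/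
def pi {ι : Type} (A : ι → SAlgebra S) : SAlgebra S where
  carrier := ∀ i, (A i).carrier
  interp o x i := (A i).interp o fun j => x j i

end SAlgebra

/-- Homomorphisms of algebras. -/
structure SHom {S : Signature} (A B : SAlgebra S) where
  toFun : A.carrier → B.carrier
  map : ∀ (o : S.ops) (x : Fin (S.arity o) → A.carrier),
    toFun (A.interp o x) = B.interp o fun i => toFun (x i)

namespace SHom

variable {S : Signature}

/-- Composition of homomorphisms. -/
def comp {A B C : SAlgebra S} (g : SHom B C) (f : SHom A B) : SHom A C where
  toFun := g.toFun ∘ f.toFun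
  map o x := by simp [Function.comp, f.map, g.map]

/-- The `i`-th projection of a product. -/
def proj {ι : Type} (A : ι → SAlgebra S) (i : ι) : SHom (SAlgebra.pi A) (A i) where
  toFun x := x i
  map _ _ := rfl

end SHom

/-- Congruences of an algebra. -/
structure SCon {S : Signature} (A : SAlgebra S) where
  r : A.carrier → A.carrier → Prop
  iseqv : Equivalence r
  compat : ∀ (o : S.ops) (x y : Fin (S.arity o) → A.carrier),
    (∀ i, r (x i) (y i)) → r (A.interp o x) (A.interp o y)

namespace SCon

variable {S : Signature} {A : SAlgebra S}

instance : PartialOrder (SCon A) where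
  le c d := ∀ x y, c.r x y → d.r x y
  le_refl _ _ _ h := h
  le_trans _ _ _ h h' x y hx := h' x y (h x y hx)
  le_antisymm a b h h' := by
    cases a; cases b
    have : ∀ x y : A.carrier, _ ↔ _ := fun x y => Iff.intro (h x y) (h' x y)
    simp only [SCon.mk.injEq]
    funext x y
    exact propext (this x y)

instance : InfSet (SCon A) :=
  ⟨fun s =>
    { r := fun x y => ∀ c ∈ s, c.r x y
      iseqv := ⟨fun x c _ => c.iseqv.refl x, fun h c hc => c.iseqv.symm (h c hc),
        fun h1 h2 c hc => c.iseqv.trans (h1 c hc) (h2 c hc)⟩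
      compat := fun o x y h c hc => c.compat o x y fun i => h i c hc }⟩

instance : CompleteLattice (SCon A) :=
  completeLatticeOfInf _ (fun s =>
    ⟨fun c hc x y h => h c hc, fun b hb x y h c hc => hb hc x y h⟩)

/-- Restriction (inverse image) of a congruence along a homomorphism. -/
def comap {B : SAlgebra S} (f : SHom A B) (θ : SCon B) : SCon A where
  r x y := θ.r (f.toFun x) (f.toFun y)
  iseqv := ⟨fun _ => θ.iseqv.refl _, θ.iseqv.symm, θ.iseqv.trans⟩
  compat o x y h := by
    show θ.r (f.toFun (A.interp o x)) (f.toFun (A.interp o y))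
    rw [f.map, f.map]
    exact θ.compat o _ _ h

/-- Product of two congruences. -/
def prodCon {A B : SAlgebra S} (φ : SCon A) (ψ : SCon B) : SCon (A.prod B) where
  r x y := φ.r x.1 y.1 ∧ ψ.r x.2 y.2
  iseqv := ⟨fun _ => ⟨φ.iseqv.refl _, ψ.iseqv.refl _⟩,
    fun h => ⟨φ.iseqv.symm h.1, ψ.iseqv.symm h.2⟩,
    fun h h' => ⟨φ.iseqv.trans h.1 h'.1, ψ.iseqv.trans h.2 h'.2⟩⟩
  compat o x y h := ⟨φ.compat o _ _ fun i => (h i).1, ψ.compat o _ _ fun i => (h i).2⟩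

/-- Product of a family of congruences. -/
def piCon {ι : Type} {A : ι → SAlgebra S} (φ : ∀ i, SCon (A i)) : SCon (SAlgebra.pi A) where
  r x y := ∀ i, (φ i).r (x i) (y i)
  iseqv := ⟨fun _ i => (φ i).iseqv.refl _, fun h i => (φ i).iseqv.symm (h i),
    fun h h' i => (φ i).iseqv.trans (h i) (h' i)⟩
  compat o x y h i := (φ i).compat o _ _ fun j => h j i

end SCon

/-- Terms in `n` variables over a signature. -/
inductive STerm (S : Signature) : ℕ → Type where
  | var : {n : ℕ} → Fin n → STerm S n
  | app : {n : ℕ} → (o : S.ops) → (Fin (S.arity o) → STerm S n) → STerm S n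

/-- Evaluation of a term in an algebra. -/
def STerm.eval {S : Signature} (A : SAlgebra S) {n : ℕ} : STerm S n → (Fin n → A.carrier) → A.carrier
  | .var i, x => x i
  | .app o t, x => A.interp o fun j => (t j).eval A x

/-- The term-condition centralizer relation `C(α, β; δ)`. -/
def Centralizes {S : Signature} (A : SAlgebra S) (α β δ : SCon A) : Prop :=
  ∀ (n m : ℕ) (t : STerm S (n + m)) (a b : Fin n → A.carrier) (u v : Fin m → A.carrier),
    (∀ i, α.r (a i) (b i)) → (∀ j, β.r (u j) (v j)) →
    δ.r (t.eval A (Fin.append a u)) (t.eval A (Fin.append a v)) →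
    δ.r (t.eval A (Fin.append b u)) (t.eval A (Fin.append b v))

/-- The commutator `[α, β]`: the least congruence `δ` with `C(α, β; δ)`. -/
def conCommutator {S : Signature} (A : SAlgebra S) (α β : SCon A) : SCon A :=
  sInf {δ | Centralizes A α β δ}

/-- The center of an algebra: the largest central congruence. -/
def conCenter {S : Signature} (A : SAlgebra S) : SCon A :=
  sSup {θ | conCommutator A θ ⊤ = ⊥}

/-- A class of algebras is a variety iff it is closed under subalgebras
(isomorphic copies included), homomorphic images and products. -/
def IsVariety {S : Signature} (V : SAlgebra S → Prop) : Prop :=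
  (∀ (A B : SAlgebra S) (e : SHom A B), Function.Injective e.toFun → V B → V A) ∧
  (∀ (A B : SAlgebra S) (p : SHom A B), Function.Surjective p.toFun → V A → V B) ∧
  (∀ (ι : Type) (A : ι → SAlgebra S), (∀ i, V (A i)) → V (SAlgebra.pi A))

/-- A congruence modular variety. -/
def IsCongruenceModularVariety {S : Signature} (V : SAlgebra S → Prop) : Prop :=
  IsVariety V ∧ ∀ A : SAlgebra S, V A → IsModularLattice (SCon A)

/-- A Gumm difference term for the class `V`:  `d(x,y,y) = x` holds identically,
and `d(x,x,y) = y` whenever `x θ y` for an abelian congruence `θ`. -/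
def IsGummDifferenceTerm {S : Signature} (V : SAlgebra S → Prop) (d : STerm S 3) : Prop :=
  (∀ A : SAlgebra S, V A → ∀ x y : A.carrier, d.eval A ![x, y, y] = x) ∧
  (∀ A : SAlgebra S, V A → ∀ θ : SCon A, conCommutator A θ θ = ⊥ →
    ∀ x y : A.carrier, θ.r x y → d.eval A ![x, x, y] = y)

/-- `R` is an absolute retract in `V`: every embedding of `R` into a member of `V`
admits a retraction. -/
def IsAbsoluteRetract {S : Signature} (V : SAlgebra S → Prop) (R : SAlgebra S) : Prop :=
  ∀ A : SAlgebra S, V A → ∀ e : SHom R A, Function.Injective e.toFun →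
    ∃ p : SHom A R, ∀ x, p.toFun (e.toFun x) = x

/-- An embedding is essential iff every congruence of the codomain restricting
trivially is trivial. -/
def IsEssential {S : Signature} {A B : SAlgebra S} (e : SHom A B) : Prop :=
  ∀ θ : SCon B, SCon.comap e θ = ⊥ → θ = ⊥

/-- A congruence `α` is dense: any congruence meeting it trivially is trivial. -/
def DenseCon {S : Signature} {A : SAlgebra S} (α : SCon A) : Prop :=
  ∀ θ : SCon A, θ ⊓ α = ⊥ → θ = ⊥

/-- The setoid underlying a congruence. -/
def SCon.setoid {S : Signature} {A : SAlgebra S} (θ : SCon A) : Setoid A.carrier :=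
  ⟨θ.r, θ.iseqv⟩

/-- Quotient algebra. -/
noncomputable def SAlgebra.quot {S : Signature} (A : SAlgebra S) (θ : SCon A) : SAlgebra S where
  carrier := Quotient θ.setoid
  interp o x := Quotient.mk θ.setoid (A.interp o fun i => (x i).out)

theorem SCon.out_rel {S : Signature} {A : SAlgebra S} (θ : SCon A) (a : A.carrier) :
    θ.r (Quotient.out (Quotient.mk θ.setoid a)) a :=
  @Quotient.exact _ θ.setoid _ _ (Quotient.out_eq _)

/-- The canonical quotient homomorphism. -/
def SHom.quotHom {S : Signature} (A : SAlgebra S) (θ : SCon A) : SHom A (A.quot θ) where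
  toFun := Quotient.mk θ.setoid
  map o x := Quotient.sound (θ.compat o _ _ fun i => θ.iseqv.symm (θ.out_rel (x i)))

/-- Product map of a family of homomorphisms. -/
def SHom.piMap {S : Signature} {ι : Type} {A B : ι → SAlgebra S} (f : ∀ i, SHom (A i) (B i)) :
    SHom (SAlgebra.pi A) (SAlgebra.pi B) where
  toFun x i := (f i).toFun (x i)
  map o x := funext fun i => (f i).map o fun j => x j i

/-- The congruence `φ/θ` on the quotient `A/θ`, for `θ ≤ φ`. -/
def SCon.quotCon {S : Signature} {A : SAlgebra S} (θ φ : SCon A) (h : θ ≤ φ) :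
    SCon (A.quot θ) where
  r a b := φ.r a.out b.out
  iseqv := ⟨fun _ => φ.iseqv.refl _, φ.iseqv.symm, φ.iseqv.trans⟩
  compat o x y hxy := by
    have hx := h _ _ (θ.out_rel (A.interp o fun i => (x i).out))
    have hy := h _ _ (θ.out_rel (A.interp o fun i => (y i).out))
    exact φ.iseqv.trans hx (φ.iseqv.trans (φ.compat o _ _ hxy) (φ.iseqv.symm hy))

/-- Finitely subdirectly irreducible: `⊥` is meet irreducible in the congruence lattice. -/
def IsFSI {S : Signature} (A : SAlgebra S) : Prop :=
  ∀ θ φ : SCon A, θ ⊓ φ = ⊥ → θ = ⊥ ∨ φ = ⊥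

/-- Subdirectly irreducible: the congruence lattice has a monolith. -/
def IsSubdirectlyIrreducible {S : Signature} (A : SAlgebra S) : Prop :=
  ∃ μ : SCon A, μ ≠ ⊥ ∧ ∀ θ : SCon A, θ ≠ ⊥ → μ ≤ θ

/-!
Suppose `θ ⊓ φ = ⊥`. By Zorn's lemma enlarge them to `θ' ≥ θ` and `φ' ≥ φ`, each maximal among
the congruences disjoint from the other. Then `A` embeds subdirectly into `A/θ' × A/φ'`, and as an
absolute retract it has a retraction `p`. Gumm's Shifting Lemma and modularity show that `ker p`
joined with either projection kernel still restricts to `θ'`, resp. `φ'`, on `A`; so every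
element of the product is the image of its own image under `p`, and the embedding is onto. By
direct indecomposability one factor is trivial, say `θ' = ⊤`, and then `φ ≤ φ' = ⊥`.
-/

namespace SHom

variable {S : Signature} {A B C : SAlgebra S}

def fst : SHom (B.prod C) B := ⟨Prod.fst, fun _ _ => rfl⟩

def snd : SHom (B.prod C) C := ⟨Prod.snd, fun _ _ => rfl⟩

def prodLift (f : SHom A B) (g : SHom A C) : SHom A (B.prod C) where
  toFun x := (f.toFun x, g.toFun x)
  map o x := Prod.ext (f.map o x) (g.map o x)

end SHom

namespace IsVariety

variable {S : Signature} {V : SAlgebra S → Prop} {A B C : SAlgebra S}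

theorem prod (hV : IsVariety V) (hB : V B) (hC : V C) : V (B.prod C) := by
  let toPi : SHom (B.prod C) (SAlgebra.pi fun b => cond b B C) :=
    ⟨fun z b => Bool.rec z.2 z.1 b, fun _ _ => funext fun b => by cases b <;> rfl⟩
  refine hV.1 _ _ toPi (fun z w h => Prod.ext (congrFun h true) (congrFun h false)) ?_
  exact hV.2.2 Bool _ fun b => by cases b <;> assumption

theorem quot (hV : IsVariety V) (hA : V A) (θ : SCon A) : V (A.quot θ) :=
  hV.2.1 A _ (SHom.quotHom A θ) Quotient.mk_surjective hA

end IsVariety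

namespace SCon

variable {S : Signature} {V : SAlgebra S → Prop} {A B D P : SAlgebra S}

@[ext]
theorem ext {c d : SCon A} (h : ∀ x y, c.r x y ↔ d.r x y) : c = d :=
  le_antisymm (fun x y => (h x y).1) (fun x y => (h x y).2)

theorem refl (c : SCon A) (x : A.carrier) : c.r x x := c.iseqv.refl x

theorem symm (c : SCon A) {x y : A.carrier} : c.r x y → c.r y x := c.iseqv.symm

theorem trans (c : SCon A) {x y z : A.carrier} : c.r x y → c.r y z → c.r x z := c.iseqv.trans

theorem r_of_le {c d : SCon A} (h : c ≤ d) {x y : A.carrier} : c.r x y → d.r x y := h x y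

@[simp]
theorem inf_r {c d : SCon A} {x y : A.carrier} : (c ⊓ d).r x y ↔ c.r x y ∧ d.r x y :=
  ⟨fun h => ⟨h c (by simp), h d (by simp)⟩, by rintro ⟨hc, hd⟩ e (rfl | rfl) <;> assumption⟩

@[simp]
theorem bot_r {x y : A.carrier} : (⊥ : SCon A).r x y ↔ x = y := by
  refine ⟨fun h => ?_, by rintro rfl; exact refl _ x⟩
  let eqCon : SCon A := ⟨Eq, ⟨fun _ => rfl, Eq.symm, Eq.trans⟩,
    fun o _ _ h => congrArg (A.interp o) (funext h)⟩
  exact r_of_le (bot_le (a := eqCon)) h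

@[simp]
theorem top_r (x y : A.carrier) : (⊤ : SCon A).r x y := fun _ h => h.elim

theorem disjoint_iff_rel {c d : SCon A} :
    Disjoint c d ↔ ∀ x y, c.r x y → d.r x y → x = y := by
  simp only [disjoint_iff, SCon.ext_iff, inf_r, bot_r]
  exact ⟨fun h x y hc hd => (h x y).1 ⟨hc, hd⟩, fun h x y => ⟨fun ⟨hc, hd⟩ => h x y hc hd, by
    rintro rfl; exact ⟨refl _ x, refl _ x⟩⟩⟩

theorem comap_mono (f : SHom A B) {c d : SCon B} (h : c ≤ d) : comap f c ≤ comap f d :=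
  fun _ _ => h _ _

def ker (f : SHom A B) : SCon A := comap f ⊥

@[simp]
theorem ker_r {f : SHom A B} {x y : A.carrier} : (ker f).r x y ↔ f.toFun x = f.toFun y := bot_r

theorem ker_le_comap (f : SHom A B) (c : SCon B) : ker f ≤ comap f c := fun x y h => by
  change c.r (f.toFun x) (f.toFun y)
  rw [ker_r.1 h]
  exact c.refl _

theorem ker_quotHom (θ : SCon A) : ker (SHom.quotHom A θ) = θ :=
  SCon.ext fun _ _ => ker_r.trans Quotient.eq

theorem eq_top_of_subsingleton_quot {θ : SCon A} (h : Subsingleton (A.quot θ).carrier) : θ = ⊤ :=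
  SCon.ext fun x y => ⟨fun _ => top_r x y, fun _ =>
    (ker_quotHom θ ▸ ker_r.2 (Subsingleton.elim (α := (A.quot θ).carrier) _ _) : θ.r x y)⟩

theorem comap_comap_of_leftInverse {e : SHom A B} {p : SHom B A}
    (hp : ∀ x, p.toFun (e.toFun x) = x) (c : SCon A) : comap e (comap p c) = c :=
  SCon.ext fun x y => by simp only [comap, hp]

def sUnionChain (c : Set (SCon A)) (hc : IsChain (· ≤ ·) c) (hne : c.Nonempty) : SCon A where
  r x y := ∃ ψ ∈ c, ψ.r x y
  iseqv := by
    obtain ⟨ψ₀, hψ₀⟩ := hne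
    refine ⟨fun x => ⟨ψ₀, hψ₀, ψ₀.refl x⟩, fun ⟨ψ, hψ, h⟩ => ⟨ψ, hψ, ψ.symm h⟩, ?_⟩
    rintro x y z ⟨ψ₁, h₁, hr₁⟩ ⟨ψ₂, h₂, hr₂⟩
    rcases hc.total h₁ h₂ with h | h
    · exact ⟨ψ₂, h₂, ψ₂.trans (r_of_le h hr₁) hr₂⟩
    · exact ⟨ψ₁, h₁, ψ₁.trans hr₁ (r_of_le h hr₂)⟩
  compat o x y h := by
    classical
    choose g hg hr using h
    have : Nonempty c := hne.to_subtype
    obtain ⟨ψ, hψ⟩ := hc.directedOn.directed_val.finset_le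
      (Finset.univ.image fun i => (⟨g i, hg i⟩ : c))
    exact ⟨ψ, ψ.2, ψ.1.compat o x y fun i => hψ ⟨g i, hg i⟩ (by simp) _ _ (hr i)⟩

theorem exists_le_maximal_disjoint {θ φ : SCon A} (h : Disjoint θ φ) :
    ∃ θ', θ ≤ θ' ∧ Maximal (Disjoint · φ) θ' := by
  refine zorn_le_nonempty₀ {ψ | Disjoint ψ φ} (fun c hcφ hc ψ hψ => ?_) θ h
  refine ⟨sUnionChain c hc ⟨ψ, hψ⟩, ?_, fun χ hχ x y h => ⟨χ, hχ, h⟩⟩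
  exact disjoint_iff_rel.2 fun x y ⟨χ, hχ, hr⟩ => disjoint_iff_rel.1 (hcφ hχ) x y hr

theorem exists_maximal_disjoint_pair {θ φ : SCon A} (h : Disjoint θ φ) :
    ∃ θ' φ', θ ≤ θ' ∧ φ ≤ φ' ∧ Maximal (Disjoint · φ') θ' ∧ Maximal (Disjoint · θ') φ' := by
  obtain ⟨θ', hθθ', hθ'⟩ := exists_le_maximal_disjoint h
  obtain ⟨φ', hφφ', hφ'⟩ := exists_le_maximal_disjoint hθ'.prop.symm
  exact ⟨θ', φ', hθθ', hφφ', ⟨hφ'.prop.symm, fun ψ hψ hle =>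
    hθ'.2 (hψ.mono_right hφφ') hle⟩, hφ'⟩

def pairAlg (β : SCon D) : SAlgebra S where
  carrier := {q : D.carrier × D.carrier // β.r q.1 q.2}
  interp o x := ⟨(D.interp o fun i => (x i).1.1, D.interp o fun i => (x i).1.2),
    β.compat o _ _ fun i => (x i).2⟩

def pairFst (β : SCon D) : SHom β.pairAlg D := ⟨fun q => q.1.1, fun _ _ => rfl⟩

def pairSnd (β : SCon D) : SHom β.pairAlg D := ⟨fun q => q.1.2, fun _ _ => rfl⟩

theorem pairAlg_mem (hV : IsVariety V) (hD : V D) (β : SCon D) : V β.pairAlg :=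
  hV.1 _ (D.prod D) ⟨Subtype.val, fun _ _ => rfl⟩ Subtype.val_injective (hV.prod hD hD)

/-- Gumm's Shifting Lemma. -/
theorem shifting (hV : IsCongruenceModularVariety V) (hD : V D) {α β γ : SCon D}
    (hαβ : α ⊓ β ≤ γ) {a b c d : D.carrier} (hab : β.r a b) (hcd : β.r c d)
    (hac : α.r a c) (hbd : α.r b d) (hγ : γ.r c d) : γ.r a b := by
  have : IsModularLattice (SCon β.pairAlg) := hV.2 _ (pairAlg_mem hV.1 hD β)
  let η : SCon β.pairAlg := ker β.pairFst
  let αα : SCon β.pairAlg := comap β.pairFst α ⊓ comap β.pairSnd α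
  let γ₂ : SCon β.pairAlg := comap β.pairSnd γ
  let ab : β.pairAlg.carrier := ⟨(a, b), hab⟩
  let cd : β.pairAlg.carrier := ⟨(c, d), hcd⟩
  let aa : β.pairAlg.carrier := ⟨(a, a), β.refl a⟩
  let cc : β.pairAlg.carrier := ⟨(c, c), β.refl c⟩
  have h_join : ((η ⊓ γ₂ ⊔ αα) ⊓ η).r ab aa := by
    refine inf_r.2 ⟨?_, ker_r.2 rfl⟩
    have h₁ : αα.r ab cd := inf_r.2 ⟨hac, hbd⟩
    have h₂ : (η ⊓ γ₂).r cd cc := inf_r.2 ⟨ker_r.2 rfl, γ.symm hγ⟩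
    have h₃ : αα.r cc aa := inf_r.2 ⟨α.symm hac, α.symm hac⟩
    exact trans _ (r_of_le le_sup_right h₁)
      (trans _ (r_of_le le_sup_left h₂) (r_of_le le_sup_right h₃))
  rw [sup_inf_assoc_of_le αα inf_le_left] at h_join
  have h_meet : αα ⊓ η ≤ γ₂ := fun q q' h => by
    obtain ⟨hαα, h₁⟩ := inf_r.1 h
    have hα : α.r q.1.2 q'.1.2 := (inf_r.1 hαα).2
    have h_fst : q.1.1 = q'.1.1 := ker_r.1 h₁
    have hβ : β.r q.1.2 q'.1.2 := β.trans (β.symm q.2) (h_fst ▸ q'.2)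
    exact r_of_le hαβ (inf_r.2 ⟨hα, hβ⟩)
  exact γ.symm (r_of_le (sup_le inf_le_right h_meet) h_join)

/-- `ε₁, ε₂` are complementary factor congruences: `ε₁ ∧ ε₂ = 0` and `ε₁ ∘ ε₂ = 1`. -/
def IsFactorPair (ε₁ ε₂ : SCon P) : Prop :=
  Disjoint ε₁ ε₂ ∧ ∀ u v, ∃ m, ε₁.r u m ∧ ε₂.r m v

theorem IsFactorPair.symm {ε₁ ε₂ : SCon P} (h : IsFactorPair ε₁ ε₂) : IsFactorPair ε₂ ε₁ :=
  ⟨h.1.symm, fun u v =>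
    let ⟨m, h₁, h₂⟩ := h.2 v u
    ⟨m, ε₂.symm h₂, ε₁.symm h₁⟩⟩

theorem isFactorPair_ker_fst_ker_snd {B C : SAlgebra S} :
    IsFactorPair (ker (SHom.fst (B := B) (C := C))) (ker SHom.snd) :=
  ⟨disjoint_iff_rel.2 fun _ _ h₁ h₂ => Prod.ext (ker_r.1 h₁) (ker_r.1 h₂),
    fun u v => ⟨(u.1, v.2), ker_r.2 rfl, ker_r.2 rfl⟩⟩

/-- The relational product `γ ∘ ε₂`; the Shifting Lemma makes it symmetric and transitive. -/
def compFactor (hV : IsCongruenceModularVariety V) (hP : V P) {ε₁ ε₂ γ : SCon P}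
    (hε : IsFactorPair ε₁ ε₂) (hγ : γ ≤ ε₁) : SCon P where
  r z w := ∃ m, γ.r z m ∧ ε₂.r m w
  iseqv := by
    have h_shift := @shifting S V P hV hP ε₂ ε₁ γ (by rw [inf_comm, hε.1.eq_bot]; exact bot_le)
    refine ⟨fun z => ⟨z, γ.refl z, ε₂.refl z⟩, ?_, ?_⟩
    · rintro z w ⟨m, hzm, hmw⟩
      obtain ⟨m', hwm', hm'z⟩ := hε.2 w z
      exact ⟨m', h_shift hwm' (ε₁.symm (r_of_le hγ hzm)) (ε₂.symm hmw) hm'z (γ.symm hzm),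
        hm'z⟩
    · rintro z w u ⟨m₁, hzm₁, hm₁w⟩ ⟨m₂, hwm₂, hm₂u⟩
      obtain ⟨m₃, hm₁m₃, hm₃m₂⟩ := hε.2 m₁ m₂
      exact ⟨m₃, γ.trans hzm₁ (h_shift hm₁m₃ (r_of_le hγ hwm₂) hm₁w hm₃m₂ hwm₂),
        ε₂.trans hm₃m₂ hm₂u⟩
  compat o x y h := by
    choose m hγm hεm using h
    exact ⟨P.interp o m, γ.compat o _ _ hγm, ε₂.compat o _ _ hεm⟩

theorem disjoint_of_disjoint_comap (hV : IsCongruenceModularVariety V) (hP : V P)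
    {e : SHom A P} {ε₁ ε₂ : SCon P} (hε : IsFactorPair ε₁ ε₂)
    (hsnd : ∀ z, ∃ x, ε₂.r (e.toFun x) z)
    (hmax : Maximal (Disjoint · (comap e ε₁)) (comap e ε₂)) {Ψ : SCon P}
    (hΨ : Disjoint (comap e Ψ) (comap e ε₁)) : Disjoint Ψ ε₁ := by
  let R := compFactor hV hP hε (inf_le_right : Ψ ⊓ ε₁ ≤ ε₁)
  have hε₂R : ε₂ ≤ R := fun z _ h => by exact ⟨z, (Ψ ⊓ ε₁).refl z, h⟩
  have hR : comap e R = comap e ε₂ := by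
    refine (hmax.eq_of_le (disjoint_iff_rel.2 fun x y hxy h₁ => ?_) (comap_mono e hε₂R)).symm
    obtain ⟨m, hxm, hmy⟩ := hxy
    obtain ⟨hΨxm, hε₁xm⟩ := inf_r.1 hxm
    have hm : m = e.toFun y := disjoint_iff_rel.1 hε.1 _ _ (ε₁.trans (ε₁.symm hε₁xm) h₁) hmy
    subst hm
    exact disjoint_iff_rel.1 hΨ x y hΨxm h₁
  refine disjoint_iff_rel.2 fun z w hΨ hε₁ => disjoint_iff_rel.1 hε.1 z w hε₁ ?_
  obtain ⟨x, hx⟩ := hsnd z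
  obtain ⟨y, hy⟩ := hsnd w
  have hRzw : R.r z w := ⟨w, inf_r.2 ⟨hΨ, hε₁⟩, ε₂.refl w⟩
  have hRxy : (comap e R).r x y :=
    R.trans (r_of_le hε₂R hx) (R.trans hRzw (r_of_le hε₂R (ε₂.symm hy)))
  rw [hR] at hRxy
  exact ε₂.trans (ε₂.symm hx) (ε₂.trans hRxy hy)

/-- A subdirect embedding of `A` into `P ≅ P/ε₁ × P/ε₂` whose two projection kernels are
maximal disjoint from each other. -/
structure IsMaximalSubdirect (e : SHom A P) (ε₁ ε₂ : SCon P) : Prop where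
  isFactorPair : IsFactorPair ε₁ ε₂
  exists_fst : ∀ z, ∃ x, ε₁.r (e.toFun x) z
  exists_snd : ∀ z, ∃ x, ε₂.r (e.toFun x) z
  maximal_fst : Maximal (Disjoint · (comap e ε₂)) (comap e ε₁)
  maximal_snd : Maximal (Disjoint · (comap e ε₁)) (comap e ε₂)

namespace IsMaximalSubdirect

variable {e : SHom A P} {ε₁ ε₂ : SCon P}

theorem symm (h : IsMaximalSubdirect e ε₁ ε₂) : IsMaximalSubdirect e ε₂ ε₁ :=
  ⟨h.isFactorPair.symm, h.exists_snd, h.exists_fst, h.maximal_snd, h.maximal_fst⟩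

theorem injective (h : IsMaximalSubdirect e ε₁ ε₂) : Function.Injective e.toFun :=
  fun x y hxy => disjoint_iff_rel.1 h.maximal_fst.prop x y
    (show ε₁.r (e.toFun x) (e.toFun y) from hxy ▸ ε₁.refl _)
    (show ε₂.r (e.toFun x) (e.toFun y) from hxy ▸ ε₂.refl _)

/-- By modularity `(ker p ⊔ ε₁) ⊓ comap p (comap e ε₂)` collapses to `ker p`, being disjoint
from `ε₁`. -/
theorem comap_ker_sup_eq (hV : IsCongruenceModularVariety V) (hP : V P)
    (h : IsMaximalSubdirect e ε₁ ε₂) {p : SHom P A} (hp : ∀ x, p.toFun (e.toFun x) = x) :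
    comap e (ker p ⊔ ε₁) = comap e ε₁ := by
  have : IsModularLattice (SCon P) := hV.2 P hP
  let L := comap p (comap e ε₂)
  have hL : comap e L = comap e ε₂ := comap_comap_of_leftInverse hp _
  have h_disj : Disjoint ((ker p ⊔ ε₁) ⊓ L) ε₁ :=
    disjoint_of_disjoint_comap hV hP h.isFactorPair h.exists_snd h.maximal_snd
      (h.maximal_snd.prop.mono_left (hL ▸ comap_mono e inf_le_right))
  have h_eq : (ker p ⊔ ε₁) ⊓ L = ker p := by
    have h_bot : ε₁ ⊓ L = ⊥ :=
      le_bot_iff.1 (h_disj.eq_bot ▸ le_inf (inf_le_inf_right L le_sup_right) inf_le_left)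
    rw [sup_inf_assoc_of_le ε₁ (ker_le_comap p _), h_bot, sup_bot_eq]
  refine h.maximal_fst.eq_of_ge (disjoint_iff_rel.2 fun x y h₁ h₂ => ?_)
    (comap_mono e le_sup_right)
  have hxy : ((ker p ⊔ ε₁) ⊓ L).r (e.toFun x) (e.toFun y) :=
    inf_r.2 ⟨h₁, (hL ▸ h₂ : (comap e L).r x y)⟩
  rw [h_eq, ker_r, hp, hp] at hxy
  exact hxy

theorem surjective_of_leftInverse (hV : IsCongruenceModularVariety V) (hP : V P)
    (h : IsMaximalSubdirect e ε₁ ε₂) {p : SHom P A} (hp : ∀ x, p.toFun (e.toFun x) = x) :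
    Function.Surjective e.toFun := by
  intro z
  have h_rel : ∀ {ε₁ ε₂ : SCon P}, IsMaximalSubdirect e ε₁ ε₂ →
      ε₁.r (e.toFun (p.toFun z)) z := fun {ε₁ _} h => by
    obtain ⟨x, hx⟩ := h.exists_fst z
    have h_ker : (ker p).r (e.toFun (p.toFun z)) z := ker_r.2 (hp _)
    have h_sup : (comap e (ker p ⊔ ε₁)).r (p.toFun z) x :=
      (ker p ⊔ ε₁).trans (r_of_le le_sup_left h_ker) (r_of_le le_sup_right (ε₁.symm hx))
    rw [h.comap_ker_sup_eq hV hP hp] at h_sup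
    exact ε₁.trans h_sup hx
  exact ⟨p.toFun z, disjoint_iff_rel.1 h.isFactorPair.1 _ _ (h_rel h) (h_rel h.symm)⟩

end IsMaximalSubdirect

theorem isMaximalSubdirect_prodLift_quotHom {θ φ : SCon A} (hθ : Maximal (Disjoint · φ) θ)
    (hφ : Maximal (Disjoint · θ) φ) :
    IsMaximalSubdirect (SHom.prodLift (SHom.quotHom A θ) (SHom.quotHom A φ))
      (ker SHom.fst) (ker SHom.snd) := by
  have h_fst : comap (SHom.prodLift (SHom.quotHom A θ) (SHom.quotHom A φ)) (ker SHom.fst) = θ :=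
    ker_quotHom θ
  have h_snd : comap (SHom.prodLift (SHom.quotHom A θ) (SHom.quotHom A φ)) (ker SHom.snd) = φ :=
    ker_quotHom φ
  refine ⟨isFactorPair_ker_fst_ker_snd, fun z => ⟨z.1.out, ker_r.2 z.1.out_eq⟩,
    fun z => ⟨z.2.out, ker_r.2 z.2.out_eq⟩, ?_, ?_⟩ <;> rwa [h_fst, h_snd]

end SCon

open SCon in
/-- A directly indecomposable absolute retract in a congruence modular variety is
finitely subdirectly irreducible. -/
theorem directly_indecomposable_AR_is_FSI {S : Signature}
    (V : SAlgebra S → Prop) (hV : IsCongruenceModularVariety V)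
    (A : SAlgebra S) (hA : V A) (har : IsAbsoluteRetract V A)
    (hind : ∀ (B C : SAlgebra S) (f : SHom A (B.prod C)), Function.Bijective f.toFun →
      Subsingleton B.carrier ∨ Subsingleton C.carrier) :
    IsFSI A := by
  intro θ φ hθφ
  obtain ⟨θ', φ', hθ, hφ, hθ', hφ'⟩ := exists_maximal_disjoint_pair (disjoint_iff.2 hθφ)
  have he := isMaximalSubdirect_prodLift_quotHom hθ' hφ'
  have hP : V ((A.quot θ').prod (A.quot φ')) := hV.1.prod (hV.1.quot hA θ') (hV.1.quot hA φ')
  obtain ⟨p, hp⟩ := har _ hP _ he.injective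
  rcases hind _ _ _ ⟨he.injective, he.surjective_of_leftInverse hV hP hp⟩ with h | h
  · have hθ'_top := eq_top_of_subsingleton_quot h
    exact .inr (le_bot_iff.1 (hφ.trans (top_disjoint.1 (hθ'_top ▸ hθ'.prop)).le))
  · have hφ'_top := eq_top_of_subsingleton_quot h
    exact .inl (le_bot_iff.1 (hθ.trans (top_disjoint.1 (hφ'_top ▸ hφ'.prop)).le))
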